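/- arXiv:1605.03850 — 4 statements merged into one kernel-verified Lean document; each statement's English description precedes it below -/
import Mathlib

section
/- Let F₁, F₂ be continuous Finsler structures on domains U₁, U₂ ⊆ ℝⁿ containing 0, satisfying bilipschitz bounds (1/C)|v| ≤ Fᵢ(x,v) ≤ C|v|. Let φ : U₁ → U₂ be a distance-preserving bijection for the induced Finsler distances, with φ(0) = 0, and suppose φ is (Fréchet) differentiable at 0. Then the linear map dφ₀ is an isometry between the Minkowski spaces (ℝⁿ, F₁(0,·)) and (ℝⁿ, F₂(0,·)), i.e., F₂(0, dφ₀(v)) = F₁(0, v) for all v ∈ ℝⁿ. -/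
/-!
Blow-up at `0`. If `w t / t → u` as `t → 0⁺`, then `d_F(0, w t) / t → F(0, u)`. The straight
segment gives the upper bound, since by compactness of the unit sphere `F(x, ·)` is uniformly
close to `F(0, ·)` for `x` near `0`. For the lower bound, a path from `0` to `w t` of length less
than `t (F(0, u) + 1)` stays, by the lower bound `|v| / C ≤ F(x, v)`, in a ball of radius
`O(t)`; there `F(x, ·) ≥ g - ε |·|` for a linear support functional `g ≤ F(0, ·)` with
`g u = F(0, u)` (Hahn–Banach), and integrating along the path gives length `≥ g (w t) - O(ε t)`.
Applied to `t v` in `U₁` and to `φ (t v)` in `U₂`, where `φ (t v) / t → L v`, the identity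
`d₂(0, φ (t v)) = d₁(0, t v)` forces `F₂(0, L v) = F₁(0, v)`.
-/

open Set

noncomputable def finslerLength {n : ℕ} (F : EuclideanSpace ℝ (Fin n) → EuclideanSpace ℝ (Fin n) → ℝ)
    (γ : ℝ → EuclideanSpace ℝ (Fin n)) : ℝ :=
  ∫ t in (0:ℝ)..1, F (γ t) (deriv γ t)

noncomputable def finslerDist {n : ℕ} (U : Set (EuclideanSpace ℝ (Fin n)))
    (F : EuclideanSpace ℝ (Fin n) → EuclideanSpace ℝ (Fin n) → ℝ)
    (p q : EuclideanSpace ℝ (Fin n)) : ℝ :=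
  sInf {L | ∃ γ : ℝ → EuclideanSpace ℝ (Fin n), ContDiff ℝ 1 γ ∧
      (∀ t ∈ Icc (0:ℝ) 1, γ t ∈ U) ∧ γ 0 = p ∧ γ 1 = q ∧ finslerLength F γ = L}

open Filter Topology

section Sublinear

variable {E : Type*} [AddCommGroup E] [Module ℝ E] {p : E → ℝ}

theorem exists_linearMap_le_sublinear_eq
    (hhom : ∀ v, ∀ c : ℝ, 0 ≤ c → p (c • v) = c * p v) (hsub : ∀ v w, p (v + w) ≤ p v + p w)
    (u : E) : ∃ g : E →ₗ[ℝ] ℝ, g u = p u ∧ ∀ x, g x ≤ p x := by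
  have hp0 : p 0 = 0 := by simpa using hhom 0 0 le_rfl
  have hker : ∀ c : ℝ, c • u = 0 → (RingHom.id ℝ) c • p u = 0 := by
    intro c hc
    rcases smul_eq_zero.1 hc with rfl | rfl
    · simp
    · simp [hp0]
  let f := LinearPMap.mkSpanSingleton' u (p u) hker
  have hf : ∀ x : f.domain, f x ≤ p x := by
    rintro ⟨x, hx⟩
    obtain ⟨c, rfl⟩ := Submodule.mem_span_singleton.1 hx
    rw [LinearPMap.mkSpanSingleton'_apply, RingHom.id_apply, smul_eq_mul]
    rcases le_or_gt 0 c with hc | hc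
    · rw [hhom u c hc]
    · -- `0 = p 0 ≤ p (c • u) + p (-c • u)` bounds `p (c • u)` below for negative `c`.
      have := hsub (c • u) ((-c) • u)
      rw [← add_smul, add_neg_cancel, zero_smul, hp0, hhom u (-c) (by linarith)] at this
      linarith
  obtain ⟨g, hgf, hgp⟩ :=
    exists_extension_of_le_sublinear f p (fun c hc x => hhom x c hc.le) hsub hf
  exact ⟨g, (hgf ⟨u, Submodule.mem_span_singleton_self u⟩).trans
    (LinearPMap.mkSpanSingleton'_apply_self _ _ _ _), hgp⟩

end Sublinear

section Continuity

variable {E : Type*} [TopologicalSpace E] {U : Set E} {F : E → E → ℝ}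

theorem continuous_apply_of_continuousOn_prod
    (hcont : ContinuousOn (fun p : E × E => F p.1 p.2) (U ×ˢ univ)) {x : E} (hx : x ∈ U) :
    Continuous (F x) :=
  continuousOn_univ.1 <| hcont.comp (continuous_const.prodMk continuous_id).continuousOn
    fun _ _ => ⟨hx, mem_univ _⟩

theorem intervalIntegrable_apply_of_continuousOn_prod
    (hcont : ContinuousOn (fun p : E × E => F p.1 p.2) (U ×ˢ univ)) {c v : ℝ → E}
    (hc : Continuous c) (hv : Continuous v) (hcU : ∀ t ∈ Icc (0 : ℝ) 1, c t ∈ U) :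
    IntervalIntegrable (fun t => F (c t) (v t)) MeasureTheory.volume 0 1 := by
  refine ContinuousOn.intervalIntegrable ?_
  rw [uIcc_of_le zero_le_one]
  exact hcont.comp (hc.prodMk hv).continuousOn fun t ht => ⟨hcU t ht, mem_univ _⟩

end Continuity

theorem eventually_abs_sub_le_mul_norm {E : Type*} [NormedAddCommGroup E] [NormedSpace ℝ E]
    [ProperSpace E] {U : Set E} {F : E → E → ℝ} {x₀ : E} (hU : U ∈ 𝓝 x₀)
    (hcont : ContinuousOn (fun p : E × E => F p.1 p.2) (U ×ˢ univ))
    (hhom : ∀ x ∈ U, ∀ v, ∀ c : ℝ, 0 ≤ c → F x (c • v) = c * F x v) {ε : ℝ} (hε : 0 < ε) :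
    ∀ᶠ x in 𝓝 x₀, ∀ v, |F x v - F x₀ v| ≤ ε * ‖v‖ := by
  have hsphere : ∀ᶠ x in 𝓝 x₀, ∀ v ∈ Metric.sphere (0 : E) 1, |F x v - F x₀ v| < ε := by
    refine (isCompact_sphere 0 1).eventually_forall_of_forall_eventually fun v _ => ?_
    have hF : ContinuousAt (fun p : E × E => F p.1 p.2 - F x₀ p.2) (x₀, v) :=
      (hcont.continuousAt (prod_mem_nhds hU Filter.univ_mem)).sub
        ((continuous_apply_of_continuousOn_prod hcont (mem_of_mem_nhds hU)).continuousAt.comp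
          continuousAt_snd)
    have h0 : |F x₀ v - F x₀ v| < ε := by simpa using hε
    exact hF.eventually (isOpen_lt continuous_abs continuous_const |>.mem_nhds h0)
  filter_upwards [hsphere, hU] with x hx hxU v
  rcases eq_or_ne v 0 with rfl | hv
  · simp [(by simpa using hhom x hxU 0 0 le_rfl : F x 0 = 0),
      (by simpa using hhom x₀ (mem_of_mem_nhds hU) 0 0 le_rfl : F x₀ 0 = 0)]
  have hunit : ‖v‖⁻¹ • v ∈ Metric.sphere (0 : E) 1 := by
    simp [norm_smul, hv]
  have hscale : ∀ y ∈ U, F y v = ‖v‖ * F y (‖v‖⁻¹ • v) := fun y hy => by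
    rw [← hhom y hy _ _ (norm_nonneg v), smul_smul, mul_inv_cancel₀ (norm_ne_zero_iff.2 hv),
      one_smul]
  rw [hscale x hxU, hscale x₀ (mem_of_mem_nhds hU), ← mul_sub, abs_mul, abs_norm, mul_comm ε]
  exact mul_le_mul_of_nonneg_left (hx _ hunit).le (norm_nonneg v)

theorem norm_sub_le_integral_norm_deriv {E : Type*} [NormedAddCommGroup E] [NormedSpace ℝ E]
    [CompleteSpace E] {γ : ℝ → E} (hγ : ContDiff ℝ 1 γ) {s : ℝ} (hs : s ∈ Icc (0 : ℝ) 1) :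
    ‖γ s - γ 0‖ ≤ ∫ t in (0 : ℝ)..1, ‖deriv γ t‖ := by
  have hγ' : Continuous (deriv γ) := hγ.continuous_deriv le_rfl
  rw [← intervalIntegral.integral_deriv_eq_sub
    (fun t _ => (hγ.differentiable one_ne_zero).differentiableAt) (hγ'.intervalIntegrable _ _)]
  calc ‖∫ t in (0 : ℝ)..s, deriv γ t‖ ≤ ∫ t in (0 : ℝ)..s, ‖deriv γ t‖ :=
        intervalIntegral.norm_integral_le_integral_norm hs.1
    _ ≤ ∫ t in (0 : ℝ)..1, ‖deriv γ t‖ :=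
        intervalIntegral.integral_mono_interval le_rfl hs.1 hs.2
          (.of_forall fun _ => norm_nonneg _) (hγ'.norm.intervalIntegrable _ _)

section Finsler

variable {n : ℕ} {U : Set (EuclideanSpace ℝ (Fin n))}
  {F : EuclideanSpace ℝ (Fin n) → EuclideanSpace ℝ (Fin n) → ℝ} {γ : ℝ → EuclideanSpace ℝ (Fin n)}

theorem finslerLength_nonneg (hnonneg : ∀ x ∈ U, ∀ v, 0 ≤ F x v)
    (hγU : ∀ t ∈ Icc (0 : ℝ) 1, γ t ∈ U) : 0 ≤ finslerLength F γ :=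
  intervalIntegral.integral_nonneg zero_le_one fun t ht => hnonneg _ (hγU t ht) _

theorem finslerDist_le_finslerLength (hnonneg : ∀ x ∈ U, ∀ v, 0 ≤ F x v) (hγ : ContDiff ℝ 1 γ)
    (hγU : ∀ t ∈ Icc (0 : ℝ) 1, γ t ∈ U) :
    finslerDist U F (γ 0) (γ 1) ≤ finslerLength F γ :=
  csInf_le ⟨0, by rintro _ ⟨γ', -, hγ'U, -, -, rfl⟩; exact finslerLength_nonneg hnonneg hγ'U⟩
    ⟨γ, hγ, hγU, rfl, rfl, rfl⟩

theorem le_finslerDist {p q : EuclideanSpace ℝ (Fin n)} {a : ℝ}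
    (hne : ∃ γ : ℝ → EuclideanSpace ℝ (Fin n), ContDiff ℝ 1 γ ∧
      (∀ t ∈ Icc (0 : ℝ) 1, γ t ∈ U) ∧ γ 0 = p ∧ γ 1 = q)
    (h : ∀ γ : ℝ → EuclideanSpace ℝ (Fin n), ContDiff ℝ 1 γ →
      (∀ t ∈ Icc (0 : ℝ) 1, γ t ∈ U) → γ 0 = p → γ 1 = q → a ≤ finslerLength F γ) :
    a ≤ finslerDist U F p q := by
  obtain ⟨γ, hγ, hγU, hγ0, hγ1⟩ := hne
  refine le_csInf ⟨_, γ, hγ, hγU, hγ0, hγ1, rfl⟩ ?_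
  rintro _ ⟨γ', hγ', hγ'U, hγ'0, hγ'1, rfl⟩
  exact h γ' hγ' hγ'U hγ'0 hγ'1

theorem finslerDist_zero_le_of_segment
    (hcont : ContinuousOn (fun p : EuclideanSpace ℝ (Fin n) × EuclideanSpace ℝ (Fin n) =>
      F p.1 p.2) (U ×ˢ univ))
    (hnonneg : ∀ x ∈ U, ∀ v, 0 ≤ F x v) {p : EuclideanSpace ℝ (Fin n)} {b : ℝ}
    (hseg : ∀ s ∈ Icc (0 : ℝ) 1, s • p ∈ U) (hb : ∀ s ∈ Icc (0 : ℝ) 1, F (s • p) p ≤ b) :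
    finslerDist U F 0 p ≤ b := by
  have hderiv : deriv (fun s : ℝ => s • p) = fun _ => p := by
    funext s
    simpa using ((hasDerivAt_id s).smul_const p).deriv
  calc finslerDist U F 0 p = finslerDist U F ((fun s : ℝ => s • p) 0) ((fun s : ℝ => s • p) 1) := by
        simp
    _ ≤ ∫ s in (0 : ℝ)..1, F (s • p) p := by
        simpa [finslerLength, hderiv] using
          finslerDist_le_finslerLength hnonneg (by fun_prop : ContDiff ℝ 1 fun s : ℝ => s • p) hseg
    _ ≤ ∫ _ in (0 : ℝ)..1, b := intervalIntegral.integral_mono_on zero_le_one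
        (intervalIntegrable_apply_of_continuousOn_prod hcont (by fun_prop) continuous_const hseg)
        intervalIntegrable_const hb
    _ = b := by simp

variable (hcont : ContinuousOn (fun p : EuclideanSpace ℝ (Fin n) × EuclideanSpace ℝ (Fin n) =>
      F p.1 p.2) (U ×ˢ univ)) (hγ : ContDiff ℝ 1 γ) (hγU : ∀ t ∈ Icc (0 : ℝ) 1, γ t ∈ U)
include hcont hγ hγU

theorem integral_norm_deriv_le_mul_finslerLength {C : ℝ} (hC : 0 < C)
    (hlow : ∀ x ∈ U, ∀ v, (1 / C) * ‖v‖ ≤ F x v) :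
    ∫ t in (0 : ℝ)..1, ‖deriv γ t‖ ≤ C * finslerLength F γ := by
  have hγ' : Continuous (deriv γ) := hγ.continuous_deriv le_rfl
  have h := intervalIntegral.integral_mono_on zero_le_one
    ((hγ'.norm.intervalIntegrable 0 1).const_mul (1 / C))
    (intervalIntegrable_apply_of_continuousOn_prod hcont hγ.continuous hγ' hγU)
    fun t ht => hlow _ (hγU t ht) (deriv γ t)
  rw [intervalIntegral.integral_const_mul] at h
  rw [finslerLength, ← div_le_iff₀' hC]
  simpa [div_eq_inv_mul] using h

theorem sub_mul_integral_norm_deriv_le_finslerLength (g : EuclideanSpace ℝ (Fin n) →L[ℝ] ℝ)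
    (ε : ℝ) (hg : ∀ t ∈ Icc (0 : ℝ) 1, ∀ v, g v - ε * ‖v‖ ≤ F (γ t) v) :
    g (γ 1 - γ 0) - ε * ∫ t in (0 : ℝ)..1, ‖deriv γ t‖ ≤ finslerLength F γ := by
  have hγ' : Continuous (deriv γ) := hγ.continuous_deriv le_rfl
  have hg' : IntervalIntegrable (fun t => g (deriv γ t)) MeasureTheory.volume 0 1 :=
    (g.continuous.comp hγ').intervalIntegrable _ _
  have hn : IntervalIntegrable (fun t => ε * ‖deriv γ t‖) MeasureTheory.volume 0 1 :=
    (continuous_const.mul hγ'.norm).intervalIntegrable _ _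
  rw [← intervalIntegral.integral_deriv_eq_sub
      (fun t _ => (hγ.differentiable one_ne_zero).differentiableAt) (hγ'.intervalIntegrable _ _),
    ← g.intervalIntegral_comp_comm (hγ'.intervalIntegrable _ _),
    ← intervalIntegral.integral_const_mul, ← intervalIntegral.integral_sub hg' hn]
  exact intervalIntegral.integral_mono_on zero_le_one (hg'.sub hn)
    (intervalIntegrable_apply_of_continuousOn_prod hcont hγ.continuous hγ' hγU)
    fun t ht => hg t ht (deriv γ t)

end Finsler

theorem tendsto_zero_of_tendsto_inv_smul {E : Type*} [NormedAddCommGroup E] [NormedSpace ℝ E]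
    {w : ℝ → E} {u : E} (hw : Tendsto (fun t => t⁻¹ • w t) (𝓝[>] 0) (𝓝 u)) :
    Tendsto w (𝓝[>] 0) (𝓝 0) := by
  have h := (tendsto_nhdsWithin_of_tendsto_nhds (tendsto_id (x := 𝓝 (0 : ℝ)))).smul hw
  rw [zero_smul] at h
  refine h.congr' ?_
  filter_upwards [self_mem_nhdsWithin] with t (ht : 0 < t)
  simp [smul_smul, ht.ne']

theorem exists_pos_add_mul_lt {a b : ℝ} (h : a < b) (K : ℝ) : ∃ ε > 0, a + ε * K < b := by
  have hlim : Tendsto (fun ε : ℝ => a + ε * K) (𝓝[>] 0) (𝓝 a) :=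
    tendsto_nhdsWithin_of_tendsto_nhds
      (Continuous.tendsto' (f := fun ε : ℝ => a + ε * K) (by fun_prop) 0 a (by simp))
  obtain ⟨ε, hεb, hε⟩ := ((hlim.eventually_lt_const h).and self_mem_nhdsWithin).exists
  exact ⟨ε, hε, hεb⟩

section BlowUp

variable {n : ℕ} {U : Set (EuclideanSpace ℝ (Fin n))}
  {F : EuclideanSpace ℝ (Fin n) → EuclideanSpace ℝ (Fin n) → ℝ} {C : ℝ}
  {u : EuclideanSpace ℝ (Fin n)} {w : ℝ → EuclideanSpace ℝ (Fin n)}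
  (hU : U ∈ 𝓝 0)
  (hcont : ContinuousOn (fun p : EuclideanSpace ℝ (Fin n) × EuclideanSpace ℝ (Fin n) =>
    F p.1 p.2) (U ×ˢ univ))
  (hhom : ∀ x ∈ U, ∀ v, ∀ c : ℝ, 0 ≤ c → F x (c • v) = c * F x v)
  (hC : 0 < C) (hlow : ∀ x ∈ U, ∀ v, (1 / C) * ‖v‖ ≤ F x v)
  (hw : Tendsto (fun t => t⁻¹ • w t) (𝓝[>] 0) (𝓝 u))
include hU hcont hhom hC hlow hw

theorem eventually_finslerDist_div_lt {a : ℝ} (ha : F 0 u < a) :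
    ∀ᶠ t in 𝓝[>] 0, finslerDist U F 0 (w t) / t < a := by
  have hnonneg : ∀ x ∈ U, ∀ v, 0 ≤ F x v := fun x hx v =>
    (by positivity : 0 ≤ 1 / C * ‖v‖).trans (hlow x hx v)
  obtain ⟨ε, hε, hεa⟩ := exists_pos_add_mul_lt ha ‖u‖
  obtain ⟨δ, hδ, hball⟩ := Metric.eventually_nhds_iff_ball.1
    ((eventually_mem_set.2 hU).and (eventually_abs_sub_le_mul_norm hU hcont hhom hε))
  have hlim : Tendsto (fun t => F 0 (t⁻¹ • w t) + ε * ‖t⁻¹ • w t‖) (𝓝[>] 0)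
      (𝓝 (F 0 u + ε * ‖u‖)) :=
    (((continuous_apply_of_continuousOn_prod hcont (mem_of_mem_nhds hU)).tendsto u).comp hw).add
      (((continuous_norm.tendsto u).comp hw).const_mul ε)
  filter_upwards [tendsto_zero_of_tendsto_inv_smul hw (Metric.ball_mem_nhds 0 hδ),
    hlim.eventually_lt_const hεa, self_mem_nhdsWithin] with t hwt hlt (ht : 0 < t)
  have hseg : ∀ s ∈ Icc (0 : ℝ) 1, s • w t ∈ Metric.ball 0 δ := fun s hs =>
    (convex_ball 0 δ).smul_mem_of_zero_mem (Metric.mem_ball_self hδ) hwt hs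
  rw [div_lt_iff₀ ht, mul_comm]
  refine (finslerDist_zero_le_of_segment hcont hnonneg (fun s hs => (hball _ (hseg s hs)).1)
    fun s hs => ?_).trans_lt (mul_lt_mul_of_pos_left hlt ht)
  obtain ⟨hxU, hx⟩ := hball _ (hseg s hs)
  have hscale : F (s • w t) (w t) = t * F (s • w t) (t⁻¹ • w t) := by
    rw [← hhom _ hxU _ _ ht.le, smul_smul, mul_inv_cancel₀ ht.ne', one_smul]
  rw [hscale]
  gcongr
  linarith [(abs_le.1 (hx (t⁻¹ • w t))).2]

theorem eventually_mul_le_finslerDist (hsub : ∀ x ∈ U, ∀ v w, F x (v + w) ≤ F x v + F x w)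
    {a : ℝ} (ha : a < F 0 u) : ∀ᶠ t in 𝓝[>] 0, a * t ≤ finslerDist U F 0 (w t) := by
  have h0 : (0 : EuclideanSpace ℝ (Fin n)) ∈ U := mem_of_mem_nhds hU
  obtain ⟨g, hgu, hgF⟩ := exists_linearMap_le_sublinear_eq (hhom 0 h0) (hsub 0 h0) u
  set g' := LinearMap.toContinuousLinearMap g
  have hg'F : ∀ v, g' v ≤ F 0 v := hgF
  set K := C * (F 0 u + 1)
  obtain ⟨ε, hε, hεa⟩ := exists_pos_add_mul_lt ha K
  obtain ⟨δ, hδ, hball⟩ := Metric.eventually_nhds_iff_ball.1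
    ((eventually_mem_set.2 hU).and (eventually_abs_sub_le_mul_norm hU hcont hhom hε))
  have hlim : Tendsto (fun t => g' (t⁻¹ • w t)) (𝓝[>] 0) (𝓝 (F 0 u)) := by
    rw [← hgu]
    exact (g'.continuous.tendsto u).comp hw
  have hKt : Tendsto (fun t : ℝ => K * t) (𝓝[>] 0) (𝓝 0) := by
    simpa using (tendsto_nhdsWithin_of_tendsto_nhds (tendsto_id (x := 𝓝 (0 : ℝ)))).const_mul K
  filter_upwards [tendsto_zero_of_tendsto_inv_smul hw (Metric.ball_mem_nhds 0 hδ),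
    hlim.eventually_const_lt hεa, hKt.eventually_lt_const hδ, self_mem_nhdsWithin]
    with t hwt hgt hKδ (ht : 0 < t)
  refine le_finslerDist ⟨fun s => s • w t, by fun_prop, fun s hs => (hball _
    ((convex_ball 0 δ).smul_mem_of_zero_mem (Metric.mem_ball_self hδ) hwt hs)).1, by simp,
    by simp⟩ fun γ hγ hγU hγ0 hγ1 => ?_
  by_cases hlong : t * (F 0 u + 1) ≤ finslerLength F γ
  · exact le_trans (by nlinarith) hlong
  push Not at hlong
  have harc : ∫ s in (0 : ℝ)..1, ‖deriv γ s‖ ≤ K * t := by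
    refine (integral_norm_deriv_le_mul_finslerLength hcont hγ hγU hC hlow).trans ?_
    nlinarith
  have hconf : ∀ s ∈ Icc (0 : ℝ) 1, γ s ∈ Metric.ball 0 δ := fun s hs => by
    have := norm_sub_le_integral_norm_deriv hγ hs
    rw [hγ0, sub_zero] at this
    exact mem_ball_zero_iff.2 (by linarith)
  have hlen := sub_mul_integral_norm_deriv_le_finslerLength hcont hγ hγU g' ε fun s hs v => by
    linarith [(abs_le.1 ((hball _ (hconf s hs)).2 v)).1, hg'F v]
  rw [hγ0, hγ1, sub_zero] at hlen
  have hgt' : g' (w t) = t * g' (t⁻¹ • w t) := by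
    rw [map_smul, smul_eq_mul, ← mul_assoc, mul_inv_cancel₀ ht.ne', one_mul]
  calc a * t ≤ t * g' (t⁻¹ • w t) - ε * (K * t) := by nlinarith
    _ ≤ finslerLength F γ := by rw [← hgt']; nlinarith

theorem tendsto_finslerDist_div (hsub : ∀ x ∈ U, ∀ v w, F x (v + w) ≤ F x v + F x w) :
    Tendsto (fun t => finslerDist U F 0 (w t) / t) (𝓝[>] 0) (𝓝 (F 0 u)) := by
  refine tendsto_order.2 ⟨fun a ha => ?_, fun a ha =>
    eventually_finslerDist_div_lt hU hcont hhom hC hlow hw ha⟩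
  obtain ⟨b, hab, hb⟩ := exists_between ha
  filter_upwards [eventually_mul_le_finslerDist hU hcont hhom hC hlow hw hsub hb,
    self_mem_nhdsWithin] with t h (ht : 0 < t)
  exact hab.trans_le ((le_div_iff₀ ht).2 h)

end BlowUp

theorem HasFDerivAt.tendsto_inv_smul_apply_smul {E G : Type*} [NormedAddCommGroup E]
    [NormedSpace ℝ E] [NormedAddCommGroup G] [NormedSpace ℝ G] {f : E → G} {L : E →L[ℝ] G}
    (hf : HasFDerivAt f L 0) (hf0 : f 0 = 0) (v : E) :
    Tendsto (fun t : ℝ => t⁻¹ • f (t • v)) (𝓝[>] 0) (𝓝 (L v)) := by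
  have hnorm : Tendsto (fun t : ℝ => ‖t⁻¹‖) (𝓝[>] 0) atTop :=
    tendsto_norm_atTop_atTop.comp tendsto_inv_nhdsGT_zero
  simpa [hf0] using hf.lim v hnorm

theorem stmt7_general {n : ℕ} (U₁ U₂ : Set (EuclideanSpace ℝ (Fin n)))
    (hU₁ : IsOpen U₁) (hU₂ : IsOpen U₂) (h0₁ : (0 : EuclideanSpace ℝ (Fin n)) ∈ U₁)
    (F₁ F₂ : EuclideanSpace ℝ (Fin n) → EuclideanSpace ℝ (Fin n) → ℝ)
    (hcont₁ : ContinuousOn (fun p : EuclideanSpace ℝ (Fin n) × EuclideanSpace ℝ (Fin n) =>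
      F₁ p.1 p.2) (U₁ ×ˢ univ))
    (hcont₂ : ContinuousOn (fun p : EuclideanSpace ℝ (Fin n) × EuclideanSpace ℝ (Fin n) =>
      F₂ p.1 p.2) (U₂ ×ˢ univ))
    (hhom₁ : ∀ x ∈ U₁, ∀ v, ∀ c : ℝ, 0 ≤ c → F₁ x (c • v) = c * F₁ x v)
    (hhom₂ : ∀ x ∈ U₂, ∀ v, ∀ c : ℝ, 0 ≤ c → F₂ x (c • v) = c * F₂ x v)
    (hsub₁ : ∀ x ∈ U₁, ∀ v w, F₁ x (v + w) ≤ F₁ x v + F₁ x w)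
    (hsub₂ : ∀ x ∈ U₂, ∀ v w, F₂ x (v + w) ≤ F₂ x v + F₂ x w)
    (C : ℝ) (hC : 0 < C)
    (hbd₁ : ∀ x ∈ U₁, ∀ v, (1 / C) * ‖v‖ ≤ F₁ x v ∧ F₁ x v ≤ C * ‖v‖)
    (hbd₂ : ∀ x ∈ U₂, ∀ v, (1 / C) * ‖v‖ ≤ F₂ x v ∧ F₂ x v ≤ C * ‖v‖)
    (φ : EuclideanSpace ℝ (Fin n) → EuclideanSpace ℝ (Fin n))
    (hbij : Set.BijOn φ U₁ U₂) (hφ0 : φ 0 = 0)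
    (hiso : ∀ x ∈ U₁, ∀ y ∈ U₁, finslerDist U₂ F₂ (φ x) (φ y) = finslerDist U₁ F₁ x y)
    (L : EuclideanSpace ℝ (Fin n) →L[ℝ] EuclideanSpace ℝ (Fin n))
    (hdiff : HasFDerivAt φ L 0) :
    ∀ v : EuclideanSpace ℝ (Fin n), F₂ 0 (L v) = F₁ 0 v := by
  intro v
  have h0₂ : (0 : EuclideanSpace ℝ (Fin n)) ∈ U₂ := hφ0 ▸ hbij.mapsTo h0₁
  have hray : Tendsto (fun t : ℝ => t⁻¹ • (t • v)) (𝓝[>] 0) (𝓝 v) :=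
    tendsto_const_nhds.congr' <| eventually_nhdsWithin_of_forall fun t (ht : 0 < t) => by
      simp [smul_smul, ht.ne']
  have hrayU₁ : ∀ᶠ t in 𝓝[>] (0 : ℝ), t • v ∈ U₁ :=
    tendsto_zero_of_tendsto_inv_smul hray (hU₁.mem_nhds h0₁)
  have hdist₁ := tendsto_finslerDist_div (hU₁.mem_nhds h0₁) hcont₁ hhom₁ hC
    (fun x hx v => (hbd₁ x hx v).1) hray hsub₁
  have hdist₂ := tendsto_finslerDist_div (hU₂.mem_nhds h0₂) hcont₂ hhom₂ hC
    (fun x hx v => (hbd₂ x hx v).1) (hdiff.tendsto_inv_smul_apply_smul hφ0 v) hsub₂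
  refine tendsto_nhds_unique (hdist₂.congr' ?_) hdist₁
  filter_upwards [hrayU₁] with t ht
  rw [← hiso 0 h0₁ _ ht, hφ0]

/-- Blow-up at a point of differentiability: the differential at `0` of a
distance-preserving bijection between Finsler domains is a linear isometry between
the Minkowski spaces `(ℝⁿ, F₁(0,·))` and `(ℝⁿ, F₂(0,·))`. -/
theorem stmt7 {n : ℕ} (U₁ U₂ : Set (EuclideanSpace ℝ (Fin n)))
    (hU₁ : IsOpen U₁) (hU₂ : IsOpen U₂) (h0₁ : (0 : EuclideanSpace ℝ (Fin n)) ∈ U₁)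
    (h0₂ : (0 : EuclideanSpace ℝ (Fin n)) ∈ U₂)
    (F₁ F₂ : EuclideanSpace ℝ (Fin n) → EuclideanSpace ℝ (Fin n) → ℝ)
    (hcont₁ : ContinuousOn (fun p : EuclideanSpace ℝ (Fin n) × EuclideanSpace ℝ (Fin n) =>
      F₁ p.1 p.2) (U₁ ×ˢ univ))
    (hcont₂ : ContinuousOn (fun p : EuclideanSpace ℝ (Fin n) × EuclideanSpace ℝ (Fin n) =>
      F₂ p.1 p.2) (U₂ ×ˢ univ))
    (hnonneg₁ : ∀ x ∈ U₁, ∀ v, 0 ≤ F₁ x v) (hnonneg₂ : ∀ x ∈ U₂, ∀ v, 0 ≤ F₂ x v)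
    (hhom₁ : ∀ x ∈ U₁, ∀ v, ∀ c : ℝ, 0 ≤ c → F₁ x (c • v) = c * F₁ x v)
    (hhom₂ : ∀ x ∈ U₂, ∀ v, ∀ c : ℝ, 0 ≤ c → F₂ x (c • v) = c * F₂ x v)
    (hsub₁ : ∀ x ∈ U₁, ∀ v w, F₁ x (v + w) ≤ F₁ x v + F₁ x w)
    (hsub₂ : ∀ x ∈ U₂, ∀ v w, F₂ x (v + w) ≤ F₂ x v + F₂ x w)
    (hpos₁ : ∀ x ∈ U₁, ∀ v, F₁ x v = 0 → v = 0)
    (hpos₂ : ∀ x ∈ U₂, ∀ v, F₂ x v = 0 → v = 0)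
    (C : ℝ) (hC : 0 < C)
    (hbd₁ : ∀ x ∈ U₁, ∀ v, (1 / C) * ‖v‖ ≤ F₁ x v ∧ F₁ x v ≤ C * ‖v‖)
    (hbd₂ : ∀ x ∈ U₂, ∀ v, (1 / C) * ‖v‖ ≤ F₂ x v ∧ F₂ x v ≤ C * ‖v‖)
    (φ : EuclideanSpace ℝ (Fin n) → EuclideanSpace ℝ (Fin n))
    (hbij : Set.BijOn φ U₁ U₂) (hφ0 : φ 0 = 0)
    (hiso : ∀ x ∈ U₁, ∀ y ∈ U₁, finslerDist U₂ F₂ (φ x) (φ y) = finslerDist U₁ F₁ x y)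
    (L : EuclideanSpace ℝ (Fin n) →L[ℝ] EuclideanSpace ℝ (Fin n))
    (hdiff : HasFDerivAt φ L 0) :
    ∀ v : EuclideanSpace ℝ (Fin n), F₂ 0 (L v) = F₁ 0 v :=
  stmt7_general U₁ U₂ hU₁ hU₂ h0₁ F₁ F₂ hcont₁ hcont₂ hhom₁ hhom₂ hsub₁ hsub₂ C hC hbd₁ hbd₂ φ hbij
    hφ0 hiso L hdiff
end

section
/- Let F be a continuous Finsler structure on a convex domain U ⊆ ℝⁿ such that the function (x,u) ↦ F(x,u) restricted to U × S^{n−1} is α-Hölder continuous and satisfies (1/C₀)|v| ≤ F(x,v) ≤ C₀|v|. Then the matrix-valued function x ↦ g^{ij}(x) given by g^{ij}(x) = n (∫_{S^{n−1}} uᵢuⱼ F(x,u)^{−(n+2)} dσ) / (∫_{S^{n−1}} F(x,u)^{−n} dσ) is α-Hölder continuous on U. -/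
/-!
On `U × S^{n-1}` the bilipschitz bounds read `C₀⁻¹ ≤ F ≤ C₀`, so for each fixed `u` the
integrands `x ↦ uᵢ uⱼ F(x,u)^{-(n+2)}` and `x ↦ F(x,u)^{-n}` are `α`-Hölder on `U` with a
constant that does not depend on `u`. Integrating over the sphere (a finite measure) keeps them
Hölder, and the quotient of two bounded Hölder functions is Hölder as soon as the denominator
stays above a positive constant, here `σ(S^{n-1}) C₀^{-n}`.
-/

open Set MeasureTheory Metric
open scoped NNReal

theorem abs_inv_le_inv_of_le {c : ℝ≥0} {t : ℝ} (hc : 0 < c) (h : c ≤ t) : |t⁻¹| ≤ c⁻¹ := by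
  rw [abs_inv, abs_of_pos ((NNReal.coe_pos.2 hc).trans_le h), NNReal.coe_inv]
  exact inv_anti₀ (NNReal.coe_pos.2 hc) h

namespace HolderOnWith

section PseudoMetric

variable {X Y : Type*} [PseudoMetricSpace X] [PseudoMetricSpace Y] {s : Set X} {C r : ℝ≥0}

theorem of_dist_le {f : X → Y}
    (h : ∀ x ∈ s, ∀ y ∈ s, dist (f x) (f y) ≤ C * dist x y ^ (r : ℝ)) :
    HolderOnWith C r f s := by
  intro x hx y hy
  rw [edist_dist, edist_dist, ENNReal.ofReal_rpow_of_nonneg dist_nonneg r.coe_nonneg,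
    ← ENNReal.ofReal_coe_nnreal, ← ENNReal.ofReal_mul C.coe_nonneg]
  exact ENNReal.ofReal_le_ofReal (h x hx y hy)

end PseudoMetric

section Prod

variable {X Y Z : Type*} [PseudoEMetricSpace X] [PseudoEMetricSpace Y] [PseudoEMetricSpace Z]
  {C r : ℝ≥0} {f : X × Y → Z} {s : Set X} {t : Set Y}

theorem comp_mk_right (hf : HolderOnWith C r f (s ×ˢ t)) {b : Y} (hb : b ∈ t) :
    HolderOnWith C r (fun a => f (a, b)) s := fun x hx y hy => by
  simpa [Prod.edist_eq] using hf (x, b) ⟨hx, hb⟩ (y, b) ⟨hy, hb⟩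

theorem comp_mk_left (hf : HolderOnWith C r f (s ×ˢ t)) {a : X} (ha : a ∈ s) :
    HolderOnWith C r (fun b => f (a, b)) t := fun x hx y hy => by
  simpa [Prod.edist_eq] using hf (a, x) ⟨ha, hx⟩ (a, y) ⟨ha, hy⟩

end Prod

section Real

variable {X : Type*} [PseudoMetricSpace X] {s : Set X} {f g : X → ℝ} {C C' r : ℝ≥0}

theorem const_mul (hf : HolderOnWith C r f s) (a : ℝ) :
    HolderOnWith (‖a‖₊ * C) r (fun x => a * f x) s :=
  of_dist_le fun x hx y hy => by
    rw [Real.dist_eq, ← mul_sub, abs_mul, NNReal.coe_mul, coe_nnnorm, Real.norm_eq_abs,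
      mul_assoc, ← Real.dist_eq]
    exact mul_le_mul_of_nonneg_left (hf.dist_le hx hy) (abs_nonneg a)

theorem mul {Mf Mg : ℝ≥0} (hf : HolderOnWith C r f s) (hg : HolderOnWith C' r g s)
    (hfM : ∀ x ∈ s, |f x| ≤ Mf) (hgM : ∀ x ∈ s, |g x| ≤ Mg) :
    HolderOnWith (Mf * C' + Mg * C) r (f * g) s :=
  of_dist_le fun x hx y hy => by
    have hfd := hf.dist_le hx hy
    have hgd := hg.dist_le hx hy
    rw [Real.dist_eq] at hfd hgd ⊢
    calc |f x * g x - f y * g y| = |f x * (g x - g y) + (f x - f y) * g y| := by ring_nf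
      _ ≤ |f x| * |g x - g y| + |f x - f y| * |g y| := by
        rw [← abs_mul, ← abs_mul]; exact abs_add_le _ _
      _ ≤ Mf * (C' * dist x y ^ (r : ℝ)) + C * dist x y ^ (r : ℝ) * Mg := by
        gcongr
        exacts [hfM x hx, hgM y hy]
      _ = ↑(Mf * C' + Mg * C) * dist x y ^ (r : ℝ) := by push_cast; ring

theorem pow {M : ℝ≥0} (hf : HolderOnWith C r f s) (hM : ∀ x ∈ s, |f x| ≤ M) (k : ℕ) :
    HolderOnWith (k * M ^ (k - 1) * C) r (f ^ k) s :=
  of_dist_le fun x hx y hy => by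
    have hfd := hf.dist_le hx hy
    rw [Real.dist_eq] at hfd ⊢
    calc |f x ^ k - f y ^ k| ≤ |f x - f y| * k * max |f x| |f y| ^ (k - 1) :=
          abs_pow_sub_pow_le ..
      _ ≤ C * dist x y ^ (r : ℝ) * k * M ^ (k - 1) := by
        gcongr
        exact max_le (hM x hx) (hM y hy)
      _ = ↑(k * M ^ (k - 1) * C) * dist x y ^ (r : ℝ) := by push_cast; ring

theorem inv (hf : HolderOnWith C r f s) {c : ℝ≥0} (hc : 0 < c) (hcf : ∀ x ∈ s, c ≤ f x) :
    HolderOnWith (C / c ^ 2) r f⁻¹ s :=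
  of_dist_le fun x hx y hy => by
    have hfx : 0 < f x := (NNReal.coe_pos.2 hc).trans_le (hcf x hx)
    have hfy : 0 < f y := (NNReal.coe_pos.2 hc).trans_le (hcf y hy)
    have hfd := hf.dist_le hx hy
    rw [Real.dist_eq] at hfd
    rw [Real.dist_eq, Pi.inv_apply, Pi.inv_apply, inv_sub_inv hfx.ne' hfy.ne', abs_div,
      abs_sub_comm, abs_of_pos (mul_pos hfx hfy), NNReal.coe_div, div_mul_eq_mul_div]
    gcongr
    rw [NNReal.coe_pow, sq]
    exact mul_le_mul (hcf x hx) (hcf y hy) c.coe_nonneg hfx.le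

theorem div {M c : ℝ≥0} (hf : HolderOnWith C r f s) (hg : HolderOnWith C' r g s)
    (hfM : ∀ x ∈ s, |f x| ≤ M) (hc : 0 < c) (hcg : ∀ x ∈ s, c ≤ g x) :
    HolderOnWith (M * (C' / c ^ 2) + c⁻¹ * C) r (fun x => f x / g x) s := by
  rw [show (fun x => f x / g x) = f * g⁻¹ from funext fun x => div_eq_mul_inv _ _]
  exact hf.mul (hg.inv hc hcg) hfM fun x hx => abs_inv_le_inv_of_le hc (hcg x hx)

end Real

theorem integral {X S E : Type*} [PseudoMetricSpace X] [MeasurableSpace S]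
    [NormedAddCommGroup E] [NormedSpace ℝ E] {s : Set X} {C r : ℝ≥0} (μ : Measure S)
    [IsFiniteMeasure μ] {f : X → S → E} (hint : ∀ x ∈ s, Integrable (f x) μ)
    (hf : ∀ u, HolderOnWith C r (f · u) s) :
    HolderOnWith (C * (μ univ).toNNReal) r (fun x => ∫ u, f x u ∂μ) s :=
  of_dist_le fun x hx y hy => by
    rw [dist_eq_norm, ← integral_sub (hint x hx) (hint y hy)]
    refine (norm_integral_le_of_norm_le_const (C := C * dist x y ^ (r : ℝ))
      (ae_of_all _ fun u => ?_)).trans_eq ?_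
    · rw [← dist_eq_norm]; exact (hf u).dist_le hx hy
    · rw [measureReal_def]; push_cast; ring

end HolderOnWith

theorem EuclideanSpace.abs_apply_mul_apply_le_one {ι : Type*} [Fintype ι]
    {u : EuclideanSpace ℝ ι} (hu : u ∈ sphere 0 1) (i j : ι) : |u i * u j| ≤ 1 := by
  have hcoord (k : ι) : |u k| ≤ 1 := by
    simpa [norm_eq_of_mem_sphere ⟨u, hu⟩] using PiLp.norm_apply_le u k
  rw [abs_mul]
  exact mul_le_one₀ (hcoord i) (abs_nonneg _) (hcoord j)

theorem abs_integral_mul_inv_pow_le {S : Type*} [MeasurableSpace S] (μ : Measure S)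
    [IsFiniteMeasure μ] {w φ : S → ℝ} {a : ℝ≥0} (ha : 0 < a) (hφ : ∀ u, a ≤ φ u)
    (hw : ∀ u, |w u| ≤ 1) (k : ℕ) :
    |∫ u, w u * (φ u)⁻¹ ^ k ∂μ| ≤ a⁻¹ ^ k * μ.real univ := by
  rw [← Real.norm_eq_abs]
  refine norm_integral_le_of_norm_le_const (ae_of_all μ fun u => ?_)
  rw [Real.norm_eq_abs, abs_mul, abs_pow, ← one_mul ((a⁻¹ : ℝ≥0) ^ k : ℝ)]
  gcongr
  exacts [hw u, abs_inv_le_inv_of_le ha (hφ u)]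

section CompactSpace

variable {S : Type*} [TopologicalSpace S] [CompactSpace S] [MeasurableSpace S]
  [OpensMeasurableSpace S] (μ : Measure S) [IsFiniteMeasure μ]

theorem integrable_mul_inv_pow {w φ : S → ℝ} (hw : Continuous w) (hφ : Continuous φ)
    (hφ0 : ∀ u, φ u ≠ 0) (k : ℕ) : Integrable (fun u => w u * (φ u)⁻¹ ^ k) μ :=
  (hw.mul ((hφ.inv₀ hφ0).pow k)).integrable_of_hasCompactSupport (.of_compactSpace _)

theorem le_integral_inv_pow {φ : S → ℝ} {b : ℝ≥0} (hφ : Continuous φ) (hφ0 : ∀ u, 0 < φ u)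
    (hφb : ∀ u, φ u ≤ b) (k : ℕ) : b⁻¹ ^ k * μ.real univ ≤ ∫ u, (φ u)⁻¹ ^ k ∂μ := by
  have hint : Integrable (fun u => (φ u)⁻¹ ^ k) μ := by
    simpa using integrable_mul_inv_pow μ continuous_const hφ (fun u => (hφ0 u).ne') k (w := 1)
  calc ((b⁻¹ : ℝ≥0) : ℝ) ^ k * μ.real univ = ∫ _u, ((b⁻¹ : ℝ≥0) : ℝ) ^ k ∂μ := by
        rw [integral_const, smul_eq_mul, mul_comm]
    _ ≤ ∫ u, (φ u)⁻¹ ^ k ∂μ := integral_mono (integrable_const _) hint fun u => by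
        rw [NNReal.coe_inv]
        exact pow_le_pow_left₀ (by positivity) (inv_anti₀ (hφ0 u) (hφb u)) k

theorem holderOnWith_integral_mul_inv_pow {X : Type*} [PseudoMetricSpace X] {Φ : X → S → ℝ}
    {s : Set X} {C r a : ℝ≥0} (ha : 0 < a) (hΦa : ∀ x ∈ s, ∀ u, a ≤ Φ x u)
    (hΦcont : ∀ x ∈ s, Continuous (Φ x)) (hΦ : ∀ u, HolderOnWith C r (Φ · u) s) {w : S → ℝ}
    (hw : Continuous w) (hw1 : ∀ u, |w u| ≤ 1) (k : ℕ) :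
    HolderOnWith (k * a⁻¹ ^ (k - 1) * (C / a ^ 2) * (μ univ).toNNReal) r
      (fun x => ∫ u, w u * (Φ x u)⁻¹ ^ k ∂μ) s := by
  have hΦ0 : ∀ x ∈ s, ∀ u, Φ x u ≠ 0 := fun x hx u =>
    ((NNReal.coe_pos.2 ha).trans_le (hΦa x hx u)).ne'
  refine HolderOnWith.integral μ
    (fun x hx => integrable_mul_inv_pow μ hw (hΦcont x hx) (hΦ0 x hx) k) fun u => ?_
  have hpow := ((hΦ u).inv ha (hΦa · · u)).pow
    (fun x hx => abs_inv_le_inv_of_le ha (hΦa x hx u)) k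
  refine (hpow.const_mul (w u)).mono_const (mul_le_of_le_one_left bot_le ?_)
  rw [← NNReal.coe_le_coe, coe_nnnorm, Real.norm_eq_abs]
  exact hw1 u

end CompactSpace

theorem stmt11_general {n : ℕ} (hn : 0 < n) (U : Set (EuclideanSpace ℝ (Fin n)))
    (F : EuclideanSpace ℝ (Fin n) → EuclideanSpace ℝ (Fin n) → ℝ)
    (C₀ : ℝ) (hC₀ : 0 < C₀)
    (hbound : ∀ x ∈ U, ∀ v, (1 / C₀) * ‖v‖ ≤ F x v ∧ F x v ≤ C₀ * ‖v‖)
    (α K : NNReal) (hα : 0 < α)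
    (hHolder : HolderOnWith K α
      (fun p : EuclideanSpace ℝ (Fin n) × EuclideanSpace ℝ (Fin n) => F p.1 p.2)
      (U ×ˢ sphere (0 : EuclideanSpace ℝ (Fin n)) 1)) :
    let g : EuclideanSpace ℝ (Fin n) → Fin n → Fin n → ℝ := fun x i j =>
      n * (∫ u : sphere (0 : EuclideanSpace ℝ (Fin n)) 1,
            (u : EuclideanSpace ℝ (Fin n)) i * (u : EuclideanSpace ℝ (Fin n)) j *
              (F x (u : EuclideanSpace ℝ (Fin n)))⁻¹ ^ (n + 2) ∂(volume.toSphere)) /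
          (∫ u : sphere (0 : EuclideanSpace ℝ (Fin n)) 1,
            (F x (u : EuclideanSpace ℝ (Fin n)))⁻¹ ^ n ∂(volume.toSphere))
    ∃ K' : NNReal, ∀ i j : Fin n, HolderOnWith K' α (fun x => g x i j) U := by
  intro g
  lift C₀ to ℝ≥0 using hC₀.le
  have : NeZero n := ⟨hn.ne'⟩
  set μ := (volume : Measure (EuclideanSpace ℝ (Fin n))).toSphere
  have hμ : 0 < (μ univ).toNNReal := ENNReal.toNNReal_pos
    (Measure.measure_univ_ne_zero.2 (Measure.toSphere_ne_zero _)) (measure_ne_top _ _)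
  have hC₀inv : 0 < C₀⁻¹ := inv_pos.2 (mod_cast hC₀)
  have hF : ∀ x ∈ U, ∀ u : sphere (0 : EuclideanSpace ℝ (Fin n)) 1,
      ((C₀⁻¹ : ℝ≥0) : ℝ) ≤ F x u ∧ F x u ≤ C₀ := fun x hx u => by
    simpa [norm_eq_of_mem_sphere u] using hbound x hx u
  have hlow := fun x hx u => (hF x hx u).1
  have hcont : ∀ x ∈ U, Continuous fun u : sphere (0 : EuclideanSpace ℝ (Fin n)) 1 => F x u :=
    fun x hx => continuousOn_iff_continuous_domRestrict.1
      ((hHolder.comp_mk_left hx).continuousOn hα)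
  have hslice := fun u : sphere (0 : EuclideanSpace ℝ (Fin n)) 1 => hHolder.comp_mk_right u.2
  have hw := fun i j (u : sphere (0 : EuclideanSpace ℝ (Fin n)) 1) =>
    EuclideanSpace.abs_apply_mul_apply_le_one u.2 i j
  have hA := fun i j => holderOnWith_integral_mul_inv_pow μ hC₀inv hlow hcont hslice
    (by fun_prop) (hw i j) (n + 2)
  have hB := holderOnWith_integral_mul_inv_pow μ hC₀inv hlow hcont hslice
    continuous_const (w := fun _ => 1) (by simp) n
  simp only [one_mul] at hB
  refine ⟨_, fun i j => ((hA i j).const_mul n).div hB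
    (M := n * C₀⁻¹⁻¹ ^ (n + 2) * (μ univ).toNNReal) (c := C₀⁻¹ ^ n * (μ univ).toNNReal)
    (fun x hx => ?_) (mul_pos (pow_pos hC₀inv n) hμ) (fun x hx => ?_)⟩
  · rw [abs_mul, Nat.abs_cast, NNReal.coe_mul, NNReal.coe_mul, mul_assoc]
    gcongr
    · simp
    · exact abs_integral_mul_inv_pow_le μ hC₀inv (hlow x hx) (hw i j) (n + 2)
  · exact_mod_cast le_integral_inv_pow μ (hcont x hx)
      (fun u => (NNReal.coe_pos.2 hC₀inv).trans_le (hlow x hx u)) (fun u => (hF x hx u).2) n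

/-- If a Finsler structure satisfying uniform bilipschitz bounds is `α`-Hölder on
`U × S^{n-1}`, then the inverse Binet–Legendre matrix
`g^{ij}(x) = n (∫_{S^{n-1}} uᵢuⱼ F(x,u)^{-(n+2)} dσ) / (∫_{S^{n-1}} F(x,u)^{-n} dσ)`
is `α`-Hölder on `U`. -/
theorem stmt11 {n : ℕ} (hn : 0 < n) (U : Set (EuclideanSpace ℝ (Fin n)))
    (hUopen : IsOpen U) (hUconv : Convex ℝ U)
    (F : EuclideanSpace ℝ (Fin n) → EuclideanSpace ℝ (Fin n) → ℝ)
    (hnonneg : ∀ x ∈ U, ∀ v, 0 ≤ F x v)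
    (hhom : ∀ x ∈ U, ∀ v, ∀ c : ℝ, 0 ≤ c → F x (c • v) = c * F x v)
    (hsub : ∀ x ∈ U, ∀ v w, F x (v + w) ≤ F x v + F x w)
    (hpos : ∀ x ∈ U, ∀ v, F x v = 0 → v = 0)
    (C₀ : ℝ) (hC₀ : 0 < C₀)
    (hbound : ∀ x ∈ U, ∀ v, (1 / C₀) * ‖v‖ ≤ F x v ∧ F x v ≤ C₀ * ‖v‖)
    (α K : NNReal) (hα : 0 < α) (hα1 : α ≤ 1)
    (hHolder : HolderOnWith K α
      (fun p : EuclideanSpace ℝ (Fin n) × EuclideanSpace ℝ (Fin n) => F p.1 p.2)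
      (U ×ˢ sphere (0 : EuclideanSpace ℝ (Fin n)) 1)) :
    let g : EuclideanSpace ℝ (Fin n) → Fin n → Fin n → ℝ := fun x i j =>
      n * (∫ u : sphere (0 : EuclideanSpace ℝ (Fin n)) 1,
            (u : EuclideanSpace ℝ (Fin n)) i * (u : EuclideanSpace ℝ (Fin n)) j *
              (F x (u : EuclideanSpace ℝ (Fin n)))⁻¹ ^ (n + 2) ∂(volume.toSphere)) /
          (∫ u : sphere (0 : EuclideanSpace ℝ (Fin n)) 1,
            (F x (u : EuclideanSpace ℝ (Fin n)))⁻¹ ^ n ∂(volume.toSphere))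
    ∃ K' : NNReal, ∀ i j : Fin n, HolderOnWith K' α (fun x => g x i j) U :=
  stmt11_general hn U F C₀ hC₀ hbound α K hα hHolder
end

section
/- If the Finsler structure F on U ⊆ ℝⁿ is Riemannian, i.e., F(x,v) = √(h_x(v,v)) for a Riemannian metric h on U (a continuous field of positive definite symmetric bilinear forms), then the Binet-Legendre metric of F coincides with h: the inverse of the matrix g^{ij}(x) = ((n+2)/λⁿ(Ω_x)) ∫_{Ω_x} vᵢvⱼ dv equals the matrix of h_x. -/
/-!
Write `h_x = Bᵀ B` and `A = B⁻¹`, so that `Ω_x` is the image of the unit ball under `A`. By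
change of variables the second-moment matrix of `Ω_x` is `|det A| A M Aᵀ`, where `M` is that of
the unit ball. Reflecting a coordinate kills the off-diagonal entries of `M` and permuting
coordinates equalizes the diagonal ones, while in polar coordinates
`∫_{B} ‖v‖² = n vol(B) / (n + 2)`; hence `M = vol(B) / (n + 2) • 1`. As
`vol(Ω_x) = |det A| vol(B)` and `A Aᵀ = h_x⁻¹`, the normalized second moment is `h_x⁻¹`.
-/

open Set MeasureTheory Metric Matrix WithLp

variable {F : Type*} [NormedAddCommGroup F] [NormedSpace ℝ F]

section AddHaar

variable {E : Type*} [NormedAddCommGroup E] [NormedSpace ℝ E] [FiniteDimensional ℝ E]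
  [MeasurableSpace E] [BorelSpace E] (μ : Measure E) [μ.IsAddHaarMeasure]

theorem setIntegral_image_linearMap {f : E →ₗ[ℝ] E} (hf : Function.Injective f) {s : Set E}
    (hs : MeasurableSet s) (g : E → F) :
    ∫ x in f '' s, g x ∂μ = |LinearMap.det f| • ∫ x in s, g (f x) ∂μ := by
  rw [integral_image_eq_integral_abs_det_fderiv_smul (f := f) μ hs
    (fun x _ => (LinearMap.toContinuousLinearMap f).hasFDerivAt.hasFDerivWithinAt) hf.injOn,
    integral_smul]
  rfl

theorem setIntegral_ball_norm_sq [Nontrivial E] :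
    ∫ x in ball (0 : E) 1, ‖x‖ ^ 2 ∂μ
      = Module.finrank ℝ E * μ.real (ball 0 1) / (Module.finrank ℝ E + 2) := by
  set d := Module.finrank ℝ E
  have hd : 0 < d := Module.finrank_pos
  have hradial : ∫ x in ball (0 : E) 1, ‖x‖ ^ 2 ∂μ
      = ∫ x, (Iio 1).indicator (fun r : ℝ => r ^ 2) ‖x‖ ∂μ := by
    rw [← integral_indicator measurableSet_ball]
    congr 1 with x
    simp only [indicator, mem_ball_zero_iff, mem_Iio]
  have hpow : ∀ r : ℝ, r ^ (d - 1) • (Iio 1).indicator (fun r : ℝ => r ^ 2) r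
      = (Iio 1).indicator (fun r => r ^ (d + 1)) r := by
    intro r
    simp only [indicator, smul_eq_mul, mul_ite, mul_zero, ← pow_add,
      show d - 1 + 2 = d + 1 by omega]
  rw [hradial, integral_fun_norm_addHaar, funext hpow,
    setIntegral_indicator measurableSet_Iio, Ioi_inter_Iio, ← integral_Ioc_eq_integral_Ioo,
    ← intervalIntegral.integral_of_le zero_le_one,
    integral_pow, nsmul_eq_mul, smul_eq_mul]
  push_cast
  field_simp
  ring

end AddHaar

section InnerProductSpace

variable {E : Type*} [NormedAddCommGroup E] [InnerProductSpace ℝ E] [FiniteDimensional ℝ E]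
  [MeasurableSpace E] [BorelSpace E]

theorem setIntegral_ball_comp_linearIsometryEquiv (e : E ≃ₗᵢ[ℝ] E) (g : E → F) (r : ℝ) :
    ∫ x in ball 0 r, g (e x) = ∫ x in ball 0 r, g x := by
  have := e.measurePreserving.setIntegral_preimage_emb e.toHomeomorph.measurableEmbedding g
    (ball 0 r)
  rwa [e.preimage_ball, e.symm.map_zero] at this

end InnerProductSpace

section EuclideanMoments

variable {ι : Type*} [Fintype ι]

noncomputable def secondMoment (s : Set (EuclideanSpace ℝ ι)) : Matrix ι ι ℝ :=
  Matrix.of fun i j => ∫ v in s, v i * v j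

theorem integrableOn_mul_coord {s : Set (EuclideanSpace ℝ ι)} (hs : Bornology.IsBounded s)
    (i j : ι) : IntegrableOn (fun v : EuclideanSpace ℝ ι => v i * v j) s :=
  ((by fun_prop : Continuous fun v : EuclideanSpace ℝ ι => v i * v j).continuousOn
    |>.integrableOn_compact hs.isCompact_closure).mono_set subset_closure

variable [DecidableEq ι]

theorem integral_ball_mul_coord_of_ne {i j : ι} (hij : i ≠ j) :
    ∫ v in ball (0 : EuclideanSpace ℝ ι) 1, v i * v j = 0 := by
  let e : EuclideanSpace ℝ ι ≃ₗᵢ[ℝ] EuclideanSpace ℝ ι :=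
    LinearIsometryEquiv.piLpCongrRight 2 fun k =>
      if k = i then LinearIsometryEquiv.neg ℝ else LinearIsometryEquiv.refl ℝ ℝ
  have hflip : ∀ v, e v i * e v j = -(v i * v j) := fun v => by
    simp [e, hij.symm]
  have := setIntegral_ball_comp_linearIsometryEquiv e (fun v => v i * v j) 1
  simp only [hflip, integral_neg] at this
  linarith

theorem integral_ball_mul_self_coord (i j : ι) :
    ∫ v in ball (0 : EuclideanSpace ℝ ι) 1, v i * v i
      = ∫ v in ball (0 : EuclideanSpace ℝ ι) 1, v j * v j := by
  let e : EuclideanSpace ℝ ι ≃ₗᵢ[ℝ] EuclideanSpace ℝ ι :=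
    LinearIsometryEquiv.piLpCongrLeft 2 ℝ ℝ (Equiv.swap i j)
  have hswap : ∀ v, e v i = v j := fun v => by
    simp [e, Equiv.piCongrLeft'_apply]
  simpa only [hswap] using
    (setIntegral_ball_comp_linearIsometryEquiv e (fun v => v i * v i) 1).symm

theorem secondMoment_ball :
    secondMoment (ball (0 : EuclideanSpace ℝ ι) 1)
      = (volume.real (ball (0 : EuclideanSpace ℝ ι) 1) / (Fintype.card ι + 2)) • 1 := by
  ext i j
  rcases eq_or_ne i j with rfl | hij
  · have : Nonempty ι := ⟨i⟩
    have hsum : ∫ v in ball (0 : EuclideanSpace ℝ ι) 1, ‖v‖ ^ 2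
        = Fintype.card ι * ∫ v in ball (0 : EuclideanSpace ℝ ι) 1, v i * v i := by
      simp only [EuclideanSpace.real_norm_sq_eq]
      simp only [sq]
      rw [integral_finsetSum _ fun k _ => integrableOn_mul_coord isBounded_ball k k,
        Finset.sum_congr rfl fun k _ => integral_ball_mul_self_coord k i, Finset.sum_const,
        Finset.card_univ, nsmul_eq_mul]
    rw [setIntegral_ball_norm_sq, finrank_euclideanSpace] at hsum
    have hcard : (Fintype.card ι : ℝ) ≠ 0 := Nat.cast_ne_zero.mpr Fintype.card_ne_zero
    simp only [secondMoment, of_apply, Matrix.smul_apply, one_apply_eq, smul_eq_mul, mul_one]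
    field_simp at hsum ⊢
    linarith
  · simp [secondMoment, integral_ball_mul_coord_of_ne hij, hij]

end EuclideanMoments

section Ellipsoid

variable {ι : Type*} [Fintype ι] [DecidableEq ι]

theorem secondMoment_image {s : Set (EuclideanSpace ℝ ι)} (hs : MeasurableSet s)
    (hb : Bornology.IsBounded s) {A : Matrix ι ι ℝ} (hA : A.det ≠ 0) :
    secondMoment (toEuclideanLin A '' s) = |A.det| • (A * secondMoment s * Aᵀ) := by
  have hinj : Function.Injective (toEuclideanLin A) := fun v w hvw =>
    ofLp_injective 2 (mulVec_injective_of_det_ne_zero hA (congrArg ofLp hvw))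
  have hexpand : ∀ (w : EuclideanSpace ℝ ι) (i j : ι),
      toEuclideanLin A w i * toEuclideanLin A w j = ∑ l, ∑ k, A i k * (w k * w l) * A j l := by
    intro w i j
    simp only [ofLp_toLpLin, toLin'_apply, mulVec, dotProduct, Finset.sum_mul_sum]
    rw [Finset.sum_comm]
    exact Finset.sum_congr rfl fun l _ => Finset.sum_congr rfl fun k _ => by ring
  have hint := integrableOn_mul_coord hb
  ext i j
  simp only [secondMoment, of_apply, Matrix.smul_apply, smul_eq_mul, mul_apply,
    transpose_apply, Finset.sum_mul]
  rw [setIntegral_image_linearMap volume hinj hs, LinearMap.det_toLpLin, smul_eq_mul]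
  simp only [hexpand]
  rw [integral_finsetSum _ fun l _ => integrable_finsetSum _ fun k _ =>
    ((hint k l).const_mul _).mul_const _]
  refine congrArg _ (Finset.sum_congr rfl fun l _ => ?_)
  rw [integral_finsetSum _ fun k _ => ((hint k l).const_mul _).mul_const _]
  exact Finset.sum_congr rfl fun k _ => by rw [integral_mul_const, integral_const_mul]

def ellipsoid (H : Matrix ι ι ℝ) : Set (EuclideanSpace ℝ ι) :=
  {v | ofLp v ⬝ᵥ H *ᵥ ofLp v < 1}

theorem ellipsoid_transpose_mul_self {A B : Matrix ι ι ℝ} (hBA : B * A = 1) :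
    ellipsoid (Bᵀ * B) = toEuclideanLin A '' ball 0 1 := by
  have hAB : A * B = 1 := mul_eq_one_comm.mp hBA
  have hinv : ∀ {C D : Matrix ι ι ℝ}, C * D = 1 →
      ∀ v, toEuclideanLin C (toEuclideanLin D v) = v := fun hCD v => by
      ext k
      simp only [ofLp_toLpLin, toLin'_apply, mulVec_mulVec, hCD, one_mulVec]
  rw [image_eq_preimage_of_inverse (hinv hBA) (hinv hAB)]
  ext v
  have hquad : ofLp v ⬝ᵥ (Bᵀ * B) *ᵥ ofLp v = ‖toEuclideanLin B v‖ ^ 2 := by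
    rw [EuclideanSpace.real_norm_sq_eq, ← mulVec_mulVec, dotProduct_mulVec, vecMul_transpose]
    simp [dotProduct, sq]
  simp only [ellipsoid, mem_ofPred_eq, mem_preimage, mem_ball_zero_iff, hquad,
    sq_lt_one_iff_abs_lt_one, abs_norm]

open scoped MatrixOrder in
theorem exists_eq_transpose_mul_self_of_posDef {H : Matrix ι ι ℝ} (hH : H.PosDef) :
    ∃ B : Matrix ι ι ℝ, B.det ≠ 0 ∧ H = Bᵀ * B := by
  obtain ⟨B, rfl⟩ := CStarAlgebra.nonneg_iff_eq_star_mul_self.mp hH.posSemidef.nonneg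
  refine ⟨B, fun hB => hH.det_pos.ne' ?_, ?_⟩
  · rw [det_mul, hB, mul_zero]
  · rw [star_eq_conjTranspose, conjTranspose_eq_transpose_of_trivial]

theorem smul_secondMoment_ellipsoid {H : Matrix ι ι ℝ} (hH : H.PosDef) :
    ((Fintype.card ι + 2 : ℝ) / volume.real (ellipsoid H)) • secondMoment (ellipsoid H)
      = H⁻¹ := by
  obtain ⟨B, hB, rfl⟩ := exists_eq_transpose_mul_self_of_posDef hH
  set A := B⁻¹
  have hBA : B * A = 1 := mul_nonsing_inv B (isUnit_iff_ne_zero.mpr hB)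
  have hA : A.det ≠ 0 := fun h => by simpa [h] using congrArg det hBA
  have hAAt : A * Aᵀ = (Bᵀ * B)⁻¹ := by
    rw [Matrix.mul_inv_rev, transpose_nonsing_inv]
  have hvol : volume.real (toEuclideanLin A '' ball (0 : EuclideanSpace ℝ ι) 1)
      = |A.det| * volume.real (ball (0 : EuclideanSpace ℝ ι) 1) := by
    rw [measureReal_def, Measure.addHaar_image_linearMap, LinearMap.det_toLpLin,
      ENNReal.toReal_mul, ENNReal.toReal_ofReal (abs_nonneg _), measureReal_def]
  have hball : 0 < volume.real (ball (0 : EuclideanSpace ℝ ι) 1) :=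
    ENNReal.toReal_pos (measure_ball_pos volume _ one_pos).ne' measure_ball_lt_top.ne
  rw [ellipsoid_transpose_mul_self hBA, secondMoment_image measurableSet_ball isBounded_ball hA,
    secondMoment_ball, hvol, Matrix.mul_smul, Matrix.mul_one, Matrix.smul_mul, hAAt, smul_smul,
    smul_smul]
  have hdet : |A.det| ≠ 0 := abs_ne_zero.mpr hA
  set V := volume.real (ball (0 : EuclideanSpace ℝ ι) 1)
  have hscalar : (Fintype.card ι + 2 : ℝ) / (|A.det| * V) * |A.det| * (V / (Fintype.card ι + 2))
      = 1 := by
    field_simp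
  rw [hscalar, one_smul]

end Ellipsoid

theorem stmt13_general {n : ℕ} (U : Set (EuclideanSpace ℝ (Fin n)))
    (h : EuclideanSpace ℝ (Fin n) → Matrix (Fin n) (Fin n) ℝ)
    (hposdef : ∀ x ∈ U, (h x).PosDef)
    (F : EuclideanSpace ℝ (Fin n) → EuclideanSpace ℝ (Fin n) → ℝ)
    (hF : ∀ x ∈ U, ∀ v, F x v = Real.sqrt (∑ i, ∑ j, v i * (h x i j * v j))) :
    ∀ x ∈ U,
      (Matrix.of fun i j : Fin n =>
        ((n + 2 : ℝ) / (volume {v : EuclideanSpace ℝ (Fin n) | F x v < 1}).toReal) *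
          ∫ v in {v : EuclideanSpace ℝ (Fin n) | F x v < 1}, v i * v j) = (h x)⁻¹ := by
  intro x hx
  have hΩ : {v : EuclideanSpace ℝ (Fin n) | F x v < 1} = ellipsoid (h x) := by
    ext v
    rw [mem_ofPred_eq, hF x hx, Real.sqrt_lt' one_pos, one_pow]
    simp only [ellipsoid, mem_ofPred_eq, dotProduct, mulVec, Finset.mul_sum]
  rw [hΩ, ← smul_secondMoment_ellipsoid (hposdef x hx), Fintype.card_fin]
  rfl

/-- If the Finsler structure is Riemannian, `F(x,v) = √(h_x(v,v))`, then the Binet–Legendre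
metric coincides with `h`: the matrix `g^{ij}(x) = ((n+2)/λⁿ(Ω_x)) ∫_{Ω_x} vᵢvⱼ dv` is the
inverse of the matrix of `h_x`. -/
theorem stmt13 {n : ℕ} (hn : 0 < n) (U : Set (EuclideanSpace ℝ (Fin n))) (hUopen : IsOpen U)
    (h : EuclideanSpace ℝ (Fin n) → Matrix (Fin n) (Fin n) ℝ)
    (hcont : ContinuousOn h U)
    (hsymm : ∀ x ∈ U, (h x).IsSymm)
    (hposdef : ∀ x ∈ U, (h x).PosDef)
    (F : EuclideanSpace ℝ (Fin n) → EuclideanSpace ℝ (Fin n) → ℝ)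
    (hF : ∀ x ∈ U, ∀ v, F x v = Real.sqrt (∑ i, ∑ j, v i * (h x i j * v j))) :
    ∀ x ∈ U,
      (Matrix.of fun i j : Fin n =>
        ((n + 2 : ℝ) / (volume {v : EuclideanSpace ℝ (Fin n) | F x v < 1}).toReal) *
          ∫ v in {v : EuclideanSpace ℝ (Fin n) | F x v < 1}, v i * v j) = (h x)⁻¹ :=
  stmt13_general U h hposdef F hF
end

section
/- Let T : ℝⁿ → ℝⁿ be an invertible linear map and F a Minkowski norm on ℝⁿ with unit ball Ω = {v : F(v) < 1}. Then the Binet-Legendre matrix g^{ij} transforms naturally: if F'(v) = F(T⁻¹ v) has unit ball T(Ω), then the matrix M'_{ij} = ((n+2)/λⁿ(TΩ)) ∫_{TΩ} vᵢvⱼ dv satisfies M' = T M Tᵀ, where M is the corresponding matrix for F. Consequently, any linear isometry between two Minkowski norms pulls back the Binet-Legendre inner product of one to that of the other. -/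
open Set MeasureTheory Matrix

/-- Naturality of the Binet–Legendre matrix: a linear isometry `T` between Minkowski norms
maps the unit ball of `F₁` onto that of `F₂` and transforms the Binet–Legendre matrix by
`M₂ = T M₁ Tᵀ`; in particular it pulls back the Binet–Legendre inner product of one
norm to that of the other. -/
theorem stmt14 {n : ℕ} (hn : 0 < n) (F₁ F₂ : (Fin n → ℝ) → ℝ)
    (hcont₁ : Continuous F₁) (hcont₂ : Continuous F₂)
    (hnonneg₁ : ∀ v, 0 ≤ F₁ v) (hnonneg₂ : ∀ v, 0 ≤ F₂ v)
    (hhom₁ : ∀ v, ∀ c : ℝ, 0 ≤ c → F₁ (c • v) = c * F₁ v)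
    (hhom₂ : ∀ v, ∀ c : ℝ, 0 ≤ c → F₂ (c • v) = c * F₂ v)
    (hsub₁ : ∀ v w, F₁ (v + w) ≤ F₁ v + F₁ w)
    (hsub₂ : ∀ v w, F₂ (v + w) ≤ F₂ v + F₂ w)
    (hpos₁ : ∀ v, F₁ v = 0 → v = 0) (hpos₂ : ∀ v, F₂ v = 0 → v = 0)
    (T : Matrix (Fin n) (Fin n) ℝ) (hT : IsUnit T.det)
    (hiso : ∀ v, F₂ (T.mulVec v) = F₁ v) :
    T.mulVec '' {v | F₁ v < 1} = {v | F₂ v < 1} ∧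
      (Matrix.of fun i j : Fin n =>
          ((n + 2 : ℝ) / (volume {v : Fin n → ℝ | F₂ v < 1}).toReal) *
            ∫ v in {v : Fin n → ℝ | F₂ v < 1}, v i * v j) =
        T * (Matrix.of fun i j : Fin n =>
          ((n + 2 : ℝ) / (volume {v : Fin n → ℝ | F₁ v < 1}).toReal) *
            ∫ v in {v : Fin n → ℝ | F₁ v < 1}, v i * v j) * Tᵀ := by
  have hinj : Function.Injective T.mulVec := Matrix.mulVec_injective_iff_isUnit.2 ((Matrix.isUnit_iff_isUnit_det T).2 hT)
  -- the image statement
  have himage : T.mulVec '' {v | F₁ v < 1} = {v | F₂ v < 1} := by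
    ext x
    constructor
    · rintro ⟨v, hv, rfl⟩
      simpa [hiso] using hv
    · intro hx
      refine ⟨T⁻¹.mulVec x, ?_, ?_⟩
      · show F₁ (T⁻¹.mulVec x) < 1
        rw [← hiso, Matrix.mulVec_mulVec, Matrix.mul_nonsing_inv T hT, Matrix.one_mulVec]
        exact hx
      · rw [Matrix.mulVec_mulVec, Matrix.mul_nonsing_inv T hT, Matrix.one_mulVec]
  refine ⟨himage, ?_⟩
  -- basic facts about Ω₁
  have hF₁0 : F₁ 0 = 0 := by
    have := hhom₁ 0 0 le_rfl
    simpa using this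
  have hΩ₁open : IsOpen {v : Fin n → ℝ | F₁ v < 1} := isOpen_lt hcont₁ continuous_const
  have hΩ₁meas : MeasurableSet {v : Fin n → ℝ | F₁ v < 1} := hΩ₁open.measurableSet
  -- boundedness of Ω₁
  haveI : Nonempty (Fin n) := ⟨⟨0, hn⟩⟩
  obtain ⟨v₀, hv₀mem, hv₀min⟩ :=
    (isCompact_sphere (0 : Fin n → ℝ) 1).exists_isMinOn
      (NormedSpace.sphere_nonempty.2 zero_le_one) hcont₁.continuousOn
  have hv₀ : v₀ ≠ 0 := by
    rw [mem_sphere_zero_iff_norm] at hv₀mem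
    intro h; rw [h, norm_zero] at hv₀mem; norm_num at hv₀mem
  have hm : 0 < F₁ v₀ := lt_of_le_of_ne (hnonneg₁ v₀) (fun h => hv₀ (hpos₁ v₀ h.symm))
  set m := F₁ v₀ with hmdef
  have hbound : {v : Fin n → ℝ | F₁ v < 1} ⊆ Metric.closedBall 0 (1 / m) := by
    intro v hv
    simp only [Metric.mem_closedBall, dist_zero_right]
    rcases eq_or_ne v 0 with rfl | hv0
    · simpa using (le_of_lt (by positivity : (0:ℝ) < 1 / m))
    · have hnv : (0:ℝ) < ‖v‖ := norm_pos_iff.2 hv0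
      have hu : (‖v‖⁻¹ • v) ∈ Metric.sphere (0 : Fin n → ℝ) 1 := by
        simp [norm_smul, abs_of_nonneg (inv_nonneg.2 hnv.le), inv_mul_cancel₀ hnv.ne']
      have hle : m ≤ F₁ (‖v‖⁻¹ • v) := hv₀min hu
      have : F₁ v = ‖v‖ * F₁ (‖v‖⁻¹ • v) := by
        rw [← hhom₁ _ _ hnv.le, smul_smul, mul_inv_cancel₀ hnv.ne', one_smul]
      have hF : ‖v‖ * m ≤ F₁ v := by
        rw [this]
        exact mul_le_mul_of_nonneg_left hle hnv.le
      have : ‖v‖ * m < 1 := lt_of_le_of_lt hF hv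
      rw [div_eq_mul_inv, one_mul]
      calc ‖v‖ = ‖v‖ * m * m⁻¹ := by field_simp
      _ ≤ 1 * m⁻¹ := by
        apply mul_le_mul_of_nonneg_right this.le (inv_nonneg.2 hm.le)
      _ = m⁻¹ := one_mul _
  have hvolfin : volume {v : Fin n → ℝ | F₁ v < 1} < ⊤ :=
    lt_of_le_of_lt (measure_mono hbound) (isCompact_closedBall _ _).measure_lt_top
  have hvolpos : 0 < volume {v : Fin n → ℝ | F₁ v < 1} :=
    hΩ₁open.measure_pos volume ⟨0, by simp [hF₁0]⟩
  set V := (volume {v : Fin n → ℝ | F₁ v < 1}).toReal with hVdef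
  have hV : 0 < V := ENNReal.toReal_pos hvolpos.ne' hvolfin.ne
  -- determinant
  set d := |T.det| with hddef
  have hd : 0 < d := abs_pos.2 (IsUnit.ne_zero hT)
  -- linear map
  set L : (Fin n → ℝ) →L[ℝ] (Fin n → ℝ) :=
    LinearMap.toContinuousLinearMap (Matrix.toLin' T) with hLdef
  have hLapp : ∀ v, L v = T.mulVec v := fun v => Matrix.toLin'_apply T v
  have hLdet : L.det = T.det := by
    rw [ContinuousLinearMap.det, LinearMap.coe_toContinuousLinearMap, LinearMap.det_toLin']
  -- volume transformation
  have hvol₂ : (volume {v : Fin n → ℝ | F₂ v < 1}).toReal = d * V := by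
    rw [← himage]
    have hfun : T.mulVec = ⇑(Matrix.toLin' T) := funext fun v => (Matrix.toLin'_apply T v).symm
    rw [hfun, Measure.addHaar_image_linearMap, LinearMap.det_toLin',
      ENNReal.toReal_mul, ENNReal.toReal_ofReal (abs_nonneg _)]
  -- integrability of coordinate products
  have hint : ∀ k l : Fin n, IntegrableOn (fun v : Fin n → ℝ => v k * v l)
      {v : Fin n → ℝ | F₁ v < 1} volume := by
    intro k l
    refine IntegrableOn.mono_set ?_ hbound
    exact ((continuous_apply k).mul (continuous_apply l)).continuousOn.integrableOn_compact
      (isCompact_closedBall _ _)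
  -- change of variables in the integral
  have hCoV : ∀ i j : Fin n,
      (∫ v in {v : Fin n → ℝ | F₂ v < 1}, v i * v j) =
        d * ∫ v in {v : Fin n → ℝ | F₁ v < 1}, T.mulVec v i * T.mulVec v j := by
    intro i j
    rw [← himage]
    have := integral_image_eq_integral_abs_det_fderiv_smul volume hΩ₁meas
      (f' := fun _ => L) (f := T.mulVec)
      (fun x _ => by
        have := L.hasFDerivAt (x := x)
        have h2 : ⇑L = T.mulVec := funext hLapp
        rw [h2] at this
        exact this.hasFDerivWithinAt)
      hinj.injOn (fun x => x i * x j)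
    rw [this]
    simp only [hLdet, smul_eq_mul]
    rw [MeasureTheory.integral_const_mul]
  -- expand the bilinear integrand
  have hexp : ∀ i j : Fin n, ∀ v : Fin n → ℝ,
      T.mulVec v i * T.mulVec v j =
        ∑ k, ∑ l, T i k * T j l * (v k * v l) := by
    intro i j v
    simp only [Matrix.mulVec, dotProduct, Finset.sum_mul_sum]
    refine Finset.sum_congr rfl fun k _ => Finset.sum_congr rfl fun l _ => by ring
  ext i j
  simp only [Matrix.mul_apply, Matrix.of_apply, Matrix.transpose_apply]
  rw [hCoV i j, hvol₂]
  have hIexp : (∫ v in {v : Fin n → ℝ | F₁ v < 1}, T.mulVec v i * T.mulVec v j) =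
      ∑ k, ∑ l, T i k * T j l * ∫ v in {v : Fin n → ℝ | F₁ v < 1}, v k * v l := by
    rw [show (fun v : Fin n → ℝ => T.mulVec v i * T.mulVec v j) =
        fun v => ∑ k, ∑ l, T i k * T j l * (v k * v l) from funext (hexp i j)]
    rw [integral_finset_sum _ (fun k _ => integrable_finset_sum _
      (fun l _ => (hint k l).const_mul _))]
    exact Finset.sum_congr rfl fun k _ => by
      rw [integral_finset_sum _ (fun l _ => (hint k l).const_mul _)]
      exact Finset.sum_congr rfl fun l _ => MeasureTheory.integral_const_mul _ _
  rw [hIexp]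
  rw [Finset.mul_sum, Finset.mul_sum]
  simp only [Finset.mul_sum, Finset.sum_mul]
  rw [Finset.sum_comm]
  refine Finset.sum_congr rfl fun l _ => Finset.sum_congr rfl fun k _ => ?_
  field_simp
end
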